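/- Let η = diag(1,…,1,−1,…,−1) be a fixed signature matrix, and let K, K' : [0,1] → 𝔰𝔬(n) be continuous. Let X : [0,1] → GL(n,ℝ) be a C¹ solution of Ẋ = Xη(K' − ½XᵀσX) for a continuous symmetric-matrix-valued σ, and let V : [0,1] → GL(n,ℝ) solve V̇ = VηK − ηK'V. Then u := XV satisfies u̇ = uη(K − ½uᵀσu), provided Vᵀ η V = η (i.e., V takes values in the pseudo-orthogonal group O(n−k,k)). -/

import Mathlib

/-! In `u̇ = ẊV + XV̇` the two `XηK'V` terms cancel, and the remaining `−½XηXᵀσXV` equals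
`−½uηuᵀσu` because `VηVᵀ = η`. -/

open Matrix

attribute [local instance] Matrix.linftyOpNormedAddCommGroup Matrix.linftyOpNormedSpace
  Matrix.linftyOpNormedRing Matrix.linftyOpNormedAlgebra

namespace Matrix

variable {m R : Type*} [Fintype m] [CommRing R]

/-- `Bᵀ η B = η` makes `η Bᵀ η` a left, hence a right, inverse of `B`. -/
theorem mul_mul_transpose_eq_of_transpose_mul_mul_eq [DecidableEq m] {η B : Matrix m m R}
    (hη : η * η = 1) (hB : Bᵀ * η * B = η) : B * η * Bᵀ = η := by
  have hleft : η * Bᵀ * η * B = 1 := by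
    rw [show η * Bᵀ * η * B = η * (Bᵀ * η * B) by simp only [Matrix.mul_assoc], hB, hη]
  have hright : B * (η * Bᵀ * η) = 1 := mul_eq_one_comm.mp hleft
  calc B * η * Bᵀ = B * (η * Bᵀ * η) * η := by
        simp only [Matrix.mul_assoc, hη, Matrix.mul_one]
    _ = η := by rw [hright, Matrix.one_mul]

theorem orthonormalizing_product_rule {η K K' σ X V : Matrix m m R} (c : R)
    (hV : V * η * Vᵀ = η) :
    X * η * (K' - c • (Xᵀ * σ * X)) * V + X * (V * η * K - η * K' * V) =
      X * V * η * (K - c • ((X * V)ᵀ * σ * (X * V))) := by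
  calc _ = X * V * η * K - c • (X * η * Xᵀ * σ * (X * V)) := by
        simp only [mul_sub, sub_mul, Matrix.mul_smul, Matrix.smul_mul]; noncomm_ring
    _ = X * V * η * K - c • (X * (V * η * Vᵀ) * Xᵀ * σ * (X * V)) := by rw [hV]
    _ = _ := by
        simp only [transpose_mul, mul_sub, Matrix.mul_smul]; noncomm_ring

end Matrix

theorem product_solves_orthonormalizing_ode_general
    (n : ℕ) (η : Matrix (Fin n) (Fin n) ℝ) (hη2 : η * η = 1)
    (K K' σ : ℝ → Matrix (Fin n) (Fin n) ℝ)
    (X V : ℝ → Matrix (Fin n) (Fin n) ℝ)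
    (hX : ∀ t ∈ Set.Icc (0 : ℝ) 1,
      HasDerivAt X (X t * η * (K' t - (1 / 2 : ℝ) • ((X t)ᵀ * σ t * X t))) t)
    (hV : ∀ t ∈ Set.Icc (0 : ℝ) 1,
      HasDerivAt V (V t * η * K t - η * K' t * V t) t)
    (hVorth : ∀ t, (V t)ᵀ * η * V t = η) :
    ∀ t ∈ Set.Icc (0 : ℝ) 1,
      HasDerivAt (fun t => X t * V t)
        ((X t * V t) * η *
          (K t - (1 / 2 : ℝ) • ((X t * V t)ᵀ * σ t * (X t * V t)))) t := by
  intro t ht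
  have hVη := mul_mul_transpose_eq_of_transpose_mul_mul_eq hη2 (hVorth t)
  rw [← orthonormalizing_product_rule _ hVη]
  exact (hX t ht).mul (hV t ht)

/-- If `X` solves `Ẋ = Xη(K' − ½XᵀσX)` and `V` solves `V̇ = VηK − ηK'V` with
`VᵀηV = η` (so `V` takes values in the pseudo-orthogonal group `O(n−k,k)`), where `η`
is a signature matrix and `K, K'` are continuous skew-symmetric-matrix-valued, then
`u := XV` solves `u̇ = uη(K − ½uᵀσu)`. -/
theorem product_solves_orthonormalizing_ode
    (n : ℕ) (η : Matrix (Fin n) (Fin n) ℝ) (hηsymm : ηᵀ = η) (hη2 : η * η = 1)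
    (K K' σ : ℝ → Matrix (Fin n) (Fin n) ℝ)
    (hKcont : Continuous K) (hK'cont : Continuous K') (hσcont : Continuous σ)
    (hKskew : ∀ t, (K t)ᵀ = -K t) (hK'skew : ∀ t, (K' t)ᵀ = -K' t)
    (hσsymm : ∀ t, (σ t)ᵀ = σ t)
    (X V : ℝ → Matrix (Fin n) (Fin n) ℝ)
    (hX : ∀ t ∈ Set.Icc (0 : ℝ) 1,
      HasDerivAt X (X t * η * (K' t - (1 / 2 : ℝ) • ((X t)ᵀ * σ t * X t))) t)
    (hV : ∀ t ∈ Set.Icc (0 : ℝ) 1,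
      HasDerivAt V (V t * η * K t - η * K' t * V t) t)
    (hVorth : ∀ t, (V t)ᵀ * η * V t = η) :
    ∀ t ∈ Set.Icc (0 : ℝ) 1,
      HasDerivAt (fun t => X t * V t)
        ((X t * V t) * η *
          (K t - (1 / 2 : ℝ) • ((X t * V t)ᵀ * σ t * (X t * V t)))) t :=
  product_solves_orthonormalizing_ode_general n η hη2 K K' σ X V hX hV hVorth
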